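/- arXiv:2605.18056 — 6 statements merged into one kernel-verified Lean document; each statement's English description precedes it below -/
import Mathlib

section
/- Let Ω ⊂ ℝ^d be a bounded open set and θ ∈ S^{d-1}. The set ∂_θΩ := {z ∈ ∂Ω : ∃ r > 0, ∀ t ∈ ]0,r[, z - tθ ∈ Ω} is a Borel subset of ∂Ω. -/
open Set

lemma isOpen_forall_Icc {d : ℕ} (Ω : Set (EuclideanSpace ℝ (Fin d)))
    (hΩ : IsOpen Ω) (θ : EuclideanSpace ℝ (Fin d)) (a b : ℝ) :
    IsOpen {z : EuclideanSpace ℝ (Fin d) | ∀ t ∈ Set.Icc a b, z - t • θ ∈ Ω} := by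
  rw [isOpen_iff_mem_nhds]
  intro z hz
  refine (isCompact_Icc (a := a) (b := b)).eventually_forall_of_forall_eventually
    (P := fun z t => z - t • θ ∈ Ω) ?_
  intro t ht
  have hc : Continuous fun p : EuclideanSpace ℝ (Fin d) × ℝ => p.1 - p.2 • θ := by
    fun_prop
  have : IsOpen {p : EuclideanSpace ℝ (Fin d) × ℝ | p.1 - p.2 • θ ∈ Ω} :=
    hΩ.preimage hc
  exact this.mem_nhds (hz t ht)

/-- The set `∂_θΩ = {z ∈ ∂Ω : ∃ r > 0, ∀ t ∈ ]0,r[, z - tθ ∈ Ω}` is a Borel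
(measurable) subset of `∂Ω`. -/
theorem stmt6 {d : ℕ} (Ω : Set (EuclideanSpace ℝ (Fin d)))
    (hΩ : IsOpen Ω) (hb : Bornology.IsBounded Ω)
    (θ : EuclideanSpace ℝ (Fin d)) (hθ : ‖θ‖ = 1) :
    MeasurableSet {z | z ∈ frontier Ω ∧
      ∃ r > (0 : ℝ), ∀ t ∈ Set.Ioo (0 : ℝ) r, z - t • θ ∈ Ω} := by
  have key : {z : EuclideanSpace ℝ (Fin d) | ∃ r > (0 : ℝ),
      ∀ t ∈ Set.Ioo (0 : ℝ) r, z - t • θ ∈ Ω} =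
      ⋃ q : {q : ℚ // 0 < q}, ⋂ n : ℕ,
        {z | ∀ t ∈ Set.Icc ((q : ℝ) / (n + 1)) (q : ℝ), z - t • θ ∈ Ω} := by
    ext z
    simp only [mem_setOf_eq, mem_iUnion, mem_iInter]
    constructor
    · rintro ⟨r, hr, h⟩
      obtain ⟨q, hq0, hqr⟩ := exists_rat_btwn hr
      refine ⟨⟨q, by exact_mod_cast hq0⟩, fun n t ht => h t ?_⟩
      have hq0' : (0 : ℝ) < (q : ℝ) := by exact_mod_cast hq0
      constructor
      · calc (0 : ℝ) < (q : ℝ) / (n + 1) := by positivity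
          _ ≤ t := ht.1
      · exact lt_of_le_of_lt ht.2 hqr
    · rintro ⟨⟨q, hq⟩, h⟩
      have hq' : (0 : ℝ) < (q : ℝ) := by exact_mod_cast hq
      refine ⟨(q : ℝ), hq', fun t ht => ?_⟩
      obtain ⟨n, hn⟩ := exists_nat_ge ((q : ℝ) / t)
      refine h n t ⟨?_, ht.2.le⟩
      have h1 : (q : ℝ) ≤ (n : ℝ) * t := (div_le_iff₀ ht.1).mp hn
      rw [div_le_iff₀ (by positivity)]
      nlinarith [ht.1]
  have : {z | z ∈ frontier Ω ∧
      ∃ r > (0 : ℝ), ∀ t ∈ Set.Ioo (0 : ℝ) r, z - t • θ ∈ Ω} =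
      frontier Ω ∩ {z | ∃ r > (0 : ℝ), ∀ t ∈ Set.Ioo (0 : ℝ) r, z - t • θ ∈ Ω} := rfl
  rw [this, key]
  refine isClosed_frontier.measurableSet.inter ?_
  refine MeasurableSet.iUnion fun q => MeasurableSet.iInter fun n =>
    (isOpen_forall_Icc Ω hΩ θ _ _).measurableSet
end

section
/- Let Ω ⊂ ℝ^d be bounded open, θ ∈ S^{d-1}, μ_θ the directional measure on ∂Ω defined by μ_θ(A) = ∫_Ω χ_A(Φ_θ(x)) dx. Then μ_θ(∂Ω \ ∂_θΩ) = 0, where ∂_θΩ = {z ∈ ∂Ω : ∃ r > 0, ∀ t ∈ ]0,r[, z - tθ ∈ Ω}. -/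
open Set MeasureTheory
open scoped ENNReal

/-- The directional exit length `δ_θ(x) = sup {s ≥ 0 : ∀ t ∈ [0,s[, x + tθ ∈ Ω}`. -/
noncomputable def deltaDir {d : ℕ} (Ω : Set (EuclideanSpace ℝ (Fin d)))
    (θ x : EuclideanSpace ℝ (Fin d)) : ℝ :=
  sSup {s : ℝ | 0 ≤ s ∧ ∀ t ∈ Set.Ico (0 : ℝ) s, x + t • θ ∈ Ω}

/-- `Φ_θ(x) = x + δ_θ(x) θ`. -/
noncomputable def PhiDir {d : ℕ} (Ω : Set (EuclideanSpace ℝ (Fin d)))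
    (θ x : EuclideanSpace ℝ (Fin d)) : EuclideanSpace ℝ (Fin d) :=
  x + deltaDir Ω θ x • θ

/-- `∂_θΩ`, the set of boundary points accessible from `Ω` in direction `θ`. -/
def dirBdry {d : ℕ} (Ω : Set (EuclideanSpace ℝ (Fin d)))
    (θ : EuclideanSpace ℝ (Fin d)) : Set (EuclideanSpace ℝ (Fin d)) :=
  {z | z ∈ frontier Ω ∧ ∃ r > (0 : ℝ), ∀ t ∈ Set.Ioo (0 : ℝ) r, z - t • θ ∈ Ω}

/-!
For `x ∈ Ω` every point `x + tθ` with `0 ≤ t < δ_θ(x)` lies in `Ω`. If `δ_θ(x) > 0`, the points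
`Φ_θ(x) - tθ = x + (δ_θ(x) - t)θ`, `0 < t < δ_θ(x)`, are of this form, so `Φ_θ(x)` is reached from
`Ω` in direction `θ`. If `δ_θ(x) = 0` (also the junk value of `sSup` when the exit times are
unbounded), then `Φ_θ(x) = x` lies in the open set `Ω`, off its boundary. Either way the integrand vanishes on `Ω`.
-/

section DirectionalExit

variable {d : ℕ} {Ω : Set (EuclideanSpace ℝ (Fin d))} {θ x : EuclideanSpace ℝ (Fin d)}

lemma zero_mem_exitTimes : (0 : ℝ) ∈ {s : ℝ | 0 ≤ s ∧ ∀ t ∈ Set.Ico (0 : ℝ) s, x + t • θ ∈ Ω} :=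
  ⟨le_rfl, fun _ ht => absurd ht.2 (not_lt.2 ht.1)⟩

lemma deltaDir_nonneg : 0 ≤ deltaDir Ω θ x :=
  Real.sSup_nonneg fun _ hs => hs.1

lemma add_smul_mem_of_lt_deltaDir {t : ℝ} (ht₀ : 0 ≤ t) (ht : t < deltaDir Ω θ x) :
    x + t • θ ∈ Ω := by
  obtain ⟨s, hs, hts⟩ := exists_lt_of_lt_csSup ⟨0, zero_mem_exitTimes⟩ ht
  exact hs.2 t ⟨ht₀, hts⟩

lemma PhiDir_sub_smul_mem_of_lt_deltaDir {t : ℝ} (ht₀ : 0 < t) (ht : t < deltaDir Ω θ x) :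
    PhiDir Ω θ x - t • θ ∈ Ω := by
  have hΦ : PhiDir Ω θ x - t • θ = x + (deltaDir Ω θ x - t) • θ := by
    rw [PhiDir, sub_smul]
    abel
  rw [hΦ]
  exact add_smul_mem_of_lt_deltaDir (by linarith) (by linarith)

lemma PhiDir_notMem_frontier_diff_dirBdry (hΩ : IsOpen Ω) (hx : x ∈ Ω) :
    PhiDir Ω θ x ∉ frontier Ω \ dirBdry Ω θ := by
  rintro ⟨hfr, hnot⟩
  rcases deltaDir_nonneg.eq_or_lt with hδ | hδ
  · rw [PhiDir, ← hδ, zero_smul, add_zero] at hfr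
    exact (IsOpen.frontier_eq hΩ ▸ hfr).2 hx
  · exact hnot ⟨hfr, deltaDir Ω θ x, hδ, fun t ht => PhiDir_sub_smul_mem_of_lt_deltaDir ht.1 ht.2⟩

end DirectionalExit

theorem stmt9_general {d : ℕ} (Ω : Set (EuclideanSpace ℝ (Fin d)))
    (hΩ : IsOpen Ω)
    (θ : EuclideanSpace ℝ (Fin d)) :
    ∫⁻ x in Ω, (frontier Ω \ dirBdry Ω θ).indicator
      (fun _ => (1 : ℝ≥0∞)) (PhiDir Ω θ x) ∂volume = 0 := by
  rw [setLIntegral_congr_fun hΩ.measurableSet fun x hx =>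
    Set.indicator_of_notMem (PhiDir_notMem_frontier_diff_dirBdry hΩ hx) _]
  exact lintegral_zero

/-- `μ_θ(∂Ω \ ∂_θΩ) = 0`, where `μ_θ(A) = ∫_Ω χ_A(Φ_θ(x)) dx`. -/
theorem stmt9 {d : ℕ} (Ω : Set (EuclideanSpace ℝ (Fin d)))
    (hΩ : IsOpen Ω) (hb : Bornology.IsBounded Ω)
    (θ : EuclideanSpace ℝ (Fin d)) (hθ : ‖θ‖ = 1) :
    ∫⁻ x in Ω, (frontier Ω \ dirBdry Ω θ).indicator
      (fun _ => (1 : ℝ≥0∞)) (PhiDir Ω θ x) ∂volume = 0 :=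
  stmt9_general Ω hΩ θ
end

section
/- Let z ∈ ∂Ω be a boundary point of a bounded open set Ω ⊂ ℝ^d. Then z lies in the closure of the set ∂_S Ω := ⋃_{θ ∈ S^{d-1}} ∂_θΩ, where ∂_θΩ = {w ∈ ∂Ω : ∃ r > 0, ∀ t ∈ ]0,r[, w - tθ ∈ Ω}. Hence the closure of ∂_S Ω equals ∂Ω. -/
open Set

/-- Every boundary point of a bounded open set `Ω ⊂ ℝ^d` lies in the closure of
`∂_SΩ = ⋃_{θ ∈ S^{d-1}} ∂_θΩ`; hence the closure of `∂_SΩ` equals `∂Ω`. -/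
theorem stmt10 {d : ℕ} (Ω : Set (EuclideanSpace ℝ (Fin d)))
    (hΩ : IsOpen Ω) (hb : Bornology.IsBounded Ω) :
    closure (⋃ θ ∈ Metric.sphere (0 : EuclideanSpace ℝ (Fin d)) 1,
      {z | z ∈ frontier Ω ∧ ∃ r > (0 : ℝ), ∀ t ∈ Set.Ioo (0 : ℝ) r, z - t • θ ∈ Ω})
      = frontier Ω := by
  apply Subset.antisymm
  · refine closure_minimal ?_ isClosed_frontier
    intro w hw
    simp only [mem_iUnion, mem_setOf_eq] at hw
    obtain ⟨θ, hθ, hwA⟩ := hw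
    exact hwA.1
  · intro z hz
    rw [Metric.mem_closure_iff]
    intro ε hε
    have hzΩ : z ∉ Ω := fun h => hz.2 (by rwa [hΩ.interior_eq])
    obtain ⟨x, hxΩ, hxz⟩ := Metric.mem_closure_iff.1 hz.1 (ε/2) (by linarith)
    set v : EuclideanSpace ℝ (Fin d) := z - x with hv
    have hvne : v ≠ 0 := sub_ne_zero.2 (fun h => hzΩ (h ▸ hxΩ))
    have hvn : (0 : ℝ) < ‖v‖ := norm_pos_iff.2 hvne
    set θ : EuclideanSpace ℝ (Fin d) := ‖v‖⁻¹ • v with hθdef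
    have hθ1 : ‖θ‖ = 1 := by
      rw [hθdef, norm_smul, norm_inv, norm_norm, inv_mul_cancel₀ hvn.ne']
    set S : Set ℝ := {t : ℝ | 0 ≤ t ∧ x + t • θ ∉ Ω} with hS
    have hvS : ‖v‖ ∈ S := by
      constructor
      · exact hvn.le
      · have : x + ‖v‖ • θ = z := by
          rw [hθdef, smul_smul, mul_inv_cancel₀ hvn.ne', one_smul, hv]
          abel
        rw [this]; exact hzΩ
    have hSne : S.Nonempty := ⟨‖v‖, hvS⟩
    have hbdd : BddBelow S := ⟨0, fun t ht => ht.1⟩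
    set t₀ : ℝ := sInf S with ht₀def
    have ht₀v : t₀ ≤ ‖v‖ := csInf_le hbdd hvS
    have hin : ∀ t, 0 ≤ t → t < t₀ → x + t • θ ∈ Ω := by
      intro t ht htlt
      by_contra h
      exact absurd (csInf_le hbdd ⟨ht, h⟩) (not_le.2 htlt)
    obtain ⟨δ, hδ, hball⟩ := Metric.isOpen_iff.1 hΩ x hxΩ
    have hδt₀ : δ ≤ t₀ := by
      refine le_csInf hSne (fun t ht => ?_)
      by_contra hlt
      push_neg at hlt
      refine ht.2 (hball ?_)
      rw [Metric.mem_ball, dist_eq_norm]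
      have : x + t • θ - x = t • θ := by abel
      rw [this, norm_smul, hθ1, mul_one, Real.norm_eq_abs, abs_of_nonneg ht.1]
      exact hlt
    have ht₀pos : 0 < t₀ := lt_of_lt_of_le hδ hδt₀
    set w : EuclideanSpace ℝ (Fin d) := x + t₀ • θ with hw
    have hwΩ : w ∉ Ω := by
      intro hwin
      obtain ⟨δ', hδ', hball'⟩ := Metric.isOpen_iff.1 hΩ w hwin
      have hlt : sInf S < t₀ + δ' := by rw [← ht₀def]; linarith
      obtain ⟨s, hsS, hslt⟩ := exists_lt_of_csInf_lt hSne hlt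
      have hst : t₀ ≤ s := csInf_le hbdd hsS
      refine hsS.2 (hball' ?_)
      rw [Metric.mem_ball, dist_eq_norm]
      have heq : x + s • θ - w = (s - t₀) • θ := by rw [hw, sub_smul]; abel
      rw [heq, norm_smul, hθ1, mul_one, Real.norm_eq_abs, abs_of_nonneg (by linarith)]
      linarith
    have hwcl : w ∈ closure Ω := by
      rw [Metric.mem_closure_iff]
      intro ε' hε'
      have hm1 : 0 < min (t₀/2) (ε'/2) := lt_min (by linarith) (by linarith)
      refine ⟨x + (t₀ - min (t₀/2) (ε'/2)) • θ, hin _ ?_ ?_, ?_⟩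
      · have := min_le_left (t₀/2) (ε'/2); linarith
      · linarith
      · rw [dist_eq_norm]
        have heq : w - (x + (t₀ - min (t₀/2) (ε'/2)) • θ)
            = (min (t₀/2) (ε'/2)) • θ := by rw [hw, sub_smul]; abel
        rw [heq, norm_smul, hθ1, mul_one, Real.norm_eq_abs, abs_of_nonneg hm1.le]
        have := min_le_right (t₀/2) (ε'/2); linarith
    have hwfr : w ∈ frontier Ω := ⟨hwcl, by rwa [hΩ.interior_eq]⟩
    refine ⟨w, ?_, ?_⟩
    · simp only [mem_iUnion, mem_setOf_eq]
      refine ⟨θ, by rwa [mem_sphere_zero_iff_norm], hwfr, t₀, ht₀pos, ?_⟩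
      intro t ht
      have heq : w - t • θ = x + (t₀ - t) • θ := by rw [hw, sub_smul]; abel
      rw [heq]
      exact hin _ (by linarith [ht.2]) (by linarith [ht.1])
    · have hwx : dist w x = t₀ := by
        rw [dist_eq_norm]
        have heq : w - x = t₀ • θ := by rw [hw]; abel
        rw [heq, norm_smul, hθ1, mul_one, Real.norm_eq_abs, abs_of_nonneg ht₀pos.le]
      have hxzn : dist z x = ‖v‖ := by rw [dist_eq_norm, hv]
      calc dist z w ≤ dist z x + dist x w := dist_triangle _ _ _
        _ = dist z x + t₀ := by rw [dist_comm x w, hwx]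
        _ ≤ dist z x + ‖v‖ := by linarith
        _ = dist z x + dist z x := by rw [hxzn]
        _ < ε := by linarith
end

section
/- Let (E, 𝒯) be a measurable space, 𝓕 a nonempty index set, (m_θ)_{θ∈𝓕} a family of measures on (E,𝒯), and p ∈ [1,∞). Define L^p(E, 𝒯, (m_θ)_{θ∈𝓕}) as the set of equivalence classes (f ~ g iff f = g m_θ-a.e. for every θ) of functions f : E → ℝ such that there is M > 0 with: for every θ there exists f_θ ∈ L^p(m_θ) with f = f_θ m_θ-a.e. and ∫|f_θ|^p dm_θ ≤ M. Then this space, with the norm ‖f‖_p = sup_{θ∈𝓕} (∫_E |f|^p dm_θ)^{1/p}, is a complete normed space (a Banach space). -/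
/-!
For every `θ`, `famNorm m p` dominates the `L^p(m_θ)` seminorm, so a Cauchy sequence has a
fast subsequence that converges `m_θ`-a.e. for every `θ` simultaneously. Its pointwise limit
`g` does not depend on `θ`, and Fatou's lemma, applied for each `θ` and then in the supremum,
bounds `famNorm m p (f n - g)` by the Cauchy modulus of `f`.
-/

open MeasureTheory
open scoped ENNReal

/-- Membership in `L^p(E, 𝒯, (m_θ)_{θ∈𝓕})`: `f` agrees `m_θ`-a.e. with an element of
`L^p(m_θ)` for every `θ`, with uniformly bounded `p`-th moments. -/
def MemLpFam {E : Type*} [MeasurableSpace E] {ι : Type*} (m : ι → Measure E)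
    (p : ℝ) (f : E → ℝ) : Prop :=
  ∃ M : ℝ, 0 < M ∧ ∀ θ : ι, ∃ fθ : E → ℝ,
    AEStronglyMeasurable fθ (m θ) ∧ f =ᵐ[m θ] fθ ∧
    ∫⁻ x, ENNReal.ofReal (|fθ x| ^ p) ∂(m θ) ≤ ENNReal.ofReal M

/-- The norm `‖f‖_p = sup_θ (∫ |f|^p dm_θ)^{1/p}` (valued in `ℝ≥0∞`). -/
noncomputable def famNorm {E : Type*} [MeasurableSpace E] {ι : Type*}
    (m : ι → Measure E) (p : ℝ) (f : E → ℝ) : ℝ≥0∞ :=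
  ⨆ θ : ι, (∫⁻ x, ENNReal.ofReal (|f x| ^ p) ∂(m θ)) ^ (1 / p)

open Filter Topology

section famNorm

variable {E ι : Type*} [MeasurableSpace E] (m : ι → Measure E) {p : ℝ}

lemma famNorm_eq_iSup_eLpNorm' (hp : 0 ≤ p) (f : E → ℝ) :
    famNorm m p f = ⨆ θ, eLpNorm' f p (m θ) := by
  refine iSup_congr fun θ => congrArg (· ^ (1 / p)) (lintegral_congr fun x => ?_)
  rw [Real.enorm_eq_ofReal_abs, ENNReal.ofReal_rpow_of_nonneg (abs_nonneg _) hp]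

lemma eLpNorm'_le_famNorm (hp : 0 ≤ p) (f : E → ℝ) (θ : ι) :
    eLpNorm' f p (m θ) ≤ famNorm m p f :=
  (famNorm_eq_iSup_eLpNorm' m hp f).symm ▸ le_iSup (fun θ => eLpNorm' f p (m θ)) θ

lemma memLpFam_iff (hp : 0 < p) {f : E → ℝ} :
    MemLpFam m p f ↔ (∀ θ, AEStronglyMeasurable f (m θ)) ∧ famNorm m p f ≠ ∞ := by
  constructor
  · rintro ⟨M, -, hM⟩
    refine ⟨fun θ => ?_, ?_⟩
    · obtain ⟨fθ, hfθ, hf_eq, -⟩ := hM θ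
      exact hfθ.congr hf_eq.symm
    · have hle : famNorm m p f ≤ ENNReal.ofReal M ^ (1 / p) := iSup_le fun θ => by
        obtain ⟨fθ, -, hf_eq, hbound⟩ := hM θ
        rw [lintegral_congr_ae (hf_eq.mono fun x hx => by rw [hx])]
        exact ENNReal.rpow_le_rpow hbound (by positivity)
      exact ne_top_of_le_ne_top
        (ENNReal.rpow_ne_top_of_nonneg (by positivity) ENNReal.ofReal_ne_top) hle
  · rintro ⟨hf, hfin⟩
    refine ⟨(famNorm m p f ^ p).toReal + 1, by positivity, fun θ => ⟨f, hf θ, .rfl, ?_⟩⟩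
    have hθ : (∫⁻ x, ENNReal.ofReal (|f x| ^ p) ∂(m θ)) ^ p⁻¹ ≤ famNorm m p f :=
      le_iSup_of_le θ (by rw [one_div])
    refine ((ENNReal.rpow_inv_le_iff hp).1 hθ).trans ?_
    rw [ENNReal.le_ofReal_iff_toReal_le (ENNReal.rpow_ne_top_of_nonneg hp.le hfin)
      (by positivity)]
    linarith

lemma famNorm_sub_le (hp : 1 ≤ p) {f g : E → ℝ} (hf : ∀ θ, AEStronglyMeasurable f (m θ))
    (hg : ∀ θ, AEStronglyMeasurable g (m θ)) :
    famNorm m p (f - g) ≤ famNorm m p f + famNorm m p g := by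
  have hp0 : (0 : ℝ) ≤ p := by linarith
  rw [famNorm_eq_iSup_eLpNorm' m hp0]
  refine iSup_le fun θ => ?_
  calc eLpNorm' (f - g) p (m θ) = eLpNorm' (f + -g) p (m θ) := by rw [sub_eq_add_neg]
    _ ≤ eLpNorm' f p (m θ) + eLpNorm' (-g) p (m θ) := eLpNorm'_add_le (hf θ) (hg θ).neg hp
    _ ≤ famNorm m p f + famNorm m p g := by
      rw [eLpNorm'_neg]
      exact add_le_add (eLpNorm'_le_famNorm m hp0 f θ) (eLpNorm'_le_famNorm m hp0 g θ)

lemma famNorm_le_of_ae_tendsto (hp : 0 < p) {u : ℕ → E → ℝ} {v : E → ℝ}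
    (hu : ∀ n θ, AEStronglyMeasurable (u n) (m θ))
    (hlim : ∀ θ, ∀ᵐ x ∂(m θ), Tendsto (fun n => u n x) atTop (𝓝 (v x)))
    {c : ℝ≥0∞} (hc : ∀ᶠ n in atTop, famNorm m p (u n) ≤ c) :
    famNorm m p v ≤ c := by
  rw [famNorm_eq_iSup_eLpNorm' m hp.le]
  refine iSup_le fun θ =>
    (Lp.eLpNorm'_lim_le_liminf_eLpNorm' hp (fun n => hu n θ) (hlim θ)).trans ?_
  exact liminf_le_of_frequently_le'
    (hc.mono fun n hn => (eLpNorm'_le_famNorm m hp.le (u n) θ).trans hn).frequently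

lemma exists_subseq_ae_tendsto_of_cauchy (hp : 1 ≤ p) {f : ℕ → E → ℝ}
    (hf : ∀ n θ, AEStronglyMeasurable (f n) (m θ))
    (hcauchy : ∀ ε > 0, ∃ N, ∀ q r, N ≤ q → N ≤ r → famNorm m p (f q - f r) < ε) :
    ∃ φ : ℕ → ℕ, StrictMono φ ∧ ∃ g : E → ℝ,
      ∀ θ, ∀ᵐ x ∂(m θ), Tendsto (fun k => f (φ k) x) atTop (𝓝 (g x)) := by
  obtain ⟨φ, hφ, hφ_cauchy⟩ := extraction_forall_of_eventually'
    (P := fun K k => ∀ q r, k ≤ q → k ≤ r → famNorm m p (f q - f r) < 2⁻¹ ^ K)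
    fun K => (hcauchy _ (ENNReal.pow_pos (ENNReal.inv_pos.2 ENNReal.ofNat_ne_top) K)).imp
      fun N hN k hk q r hq hr => hN q r (hk.trans hq) (hk.trans hr)
  have hae : ∀ θ, ∀ᵐ x ∂(m θ), ∃ l, Tendsto (fun k => f (φ k) x) atTop (𝓝 l) := fun θ =>
    Lp.ae_tendsto_of_cauchy_eLpNorm' (fun k => hf (φ k) θ) hp (B := fun K => 2⁻¹ ^ K)
      (by simp) fun K j l hj hl => (eLpNorm'_le_famNorm m (by linarith) _ θ).trans_lt
        (hφ_cauchy K _ _ (hφ.monotone hj) (hφ.monotone hl))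
  refine ⟨φ, hφ, fun x => limUnder atTop fun k => f (φ k) x, fun θ => ?_⟩
  filter_upwards [hae θ] with x hx using tendsto_nhds_limUnder hx

end famNorm

theorem stmt11_general {E : Type*} [MeasurableSpace E] {ι : Type*}
    (m : ι → Measure E) (p : ℝ) (hp : 1 ≤ p)
    (f : ℕ → E → ℝ) (hf : ∀ n, MemLpFam m p (f n))
    (hcauchy : ∀ ε : ℝ, 0 < ε → ∃ N : ℕ, ∀ q r : ℕ, N ≤ q → N ≤ r →
      famNorm m p (fun x => f q x - f r x) ≤ ENNReal.ofReal ε) :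
    ∃ g : E → ℝ, MemLpFam m p g ∧
      Filter.Tendsto (fun n => famNorm m p (fun x => f n x - g x))
        Filter.atTop (nhds 0) := by
  have hp0 : 0 < p := by linarith
  have hmeas n θ : AEStronglyMeasurable (f n) (m θ) := ((memLpFam_iff m hp0).1 (hf n)).1 θ
  have hcauchy' : ∀ ε > 0, ∃ N, ∀ q r, N ≤ q → N ≤ r → famNorm m p (f q - f r) < ε := by
    intro ε hε
    obtain ⟨δ, -, hδ_pos, hδ⟩ := ENNReal.lt_iff_exists_real_btwn.1 hε
    exact (hcauchy δ (ENNReal.ofReal_pos.1 hδ_pos)).imp fun N hN q r hq hr =>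
      (hN q r hq hr).trans_lt hδ
  obtain ⟨φ, hφ, g, hlim⟩ := exists_subseq_ae_tendsto_of_cauchy m hp hmeas hcauchy'
  have hg θ : AEStronglyMeasurable g (m θ) :=
    aestronglyMeasurable_of_tendsto_ae _ (fun k => hmeas (φ k) θ) (hlim θ)
  have hconv : ∀ ε > 0, ∃ N, ∀ n ≥ N, famNorm m p (f n - g) ≤ ε := by
    intro ε hε
    obtain ⟨N, hN⟩ := hcauchy' ε hε
    refine ⟨N, fun n hn =>
      famNorm_le_of_ae_tendsto m hp0 (u := fun k => f n - f (φ k))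
        (fun k θ => (hmeas n θ).sub (hmeas (φ k) θ))
        (fun θ => (hlim θ).mono fun x hx => hx.const_sub (f n x)) ?_⟩
    filter_upwards [hφ.tendsto_atTop.eventually_ge_atTop N] with k hk
    exact (hN n (φ k) hn hk).le
  refine ⟨g, (memLpFam_iff m hp0).2 ⟨hg, ?_⟩, ENNReal.tendsto_atTop_zero.2 hconv⟩
  obtain ⟨N, hN⟩ := hconv 1 one_pos
  have hg_le : famNorm m p g ≤ famNorm m p (f N) + famNorm m p (f N - g) := by
    simpa only [sub_sub_cancel] using
      famNorm_sub_le m hp (hmeas N) fun θ => (hmeas N θ).sub (hg θ)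
  exact ne_top_of_le_ne_top (ENNReal.add_ne_top.2 ⟨((memLpFam_iff m hp0).1 (hf N)).2,
    ne_top_of_le_ne_top ENNReal.one_ne_top (hN N le_rfl)⟩) hg_le

/-- `L^p(E, 𝒯, (m_θ)_{θ∈𝓕})` is complete: every Cauchy sequence for the norm
`‖·‖_p = sup_θ ‖·‖_{L^p(m_θ)}` converges (up to the equivalence `f ~ g` iff
`f = g` `m_θ`-a.e. for all `θ`, convergence in norm identifies limits). -/
theorem stmt11 {E : Type*} [MeasurableSpace E] {ι : Type*} [Nonempty ι]
    (m : ι → Measure E) (p : ℝ) (hp : 1 ≤ p)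
    (f : ℕ → E → ℝ) (hf : ∀ n, MemLpFam m p (f n))
    (hcauchy : ∀ ε : ℝ, 0 < ε → ∃ N : ℕ, ∀ q r : ℕ, N ≤ q → N ≤ r →
      famNorm m p (fun x => f q x - f r x) ≤ ENNReal.ofReal ε) :
    ∃ g : E → ℝ, MemLpFam m p g ∧
      Filter.Tendsto (fun n => famNorm m p (fun x => f n x - g x))
        Filter.atTop (nhds 0) :=
  stmt11_general m p hp f hf hcauchy
end

section
/- Let α < β be reals, I ⊆ ℕ nonempty, and (a_i, b_i)_{i∈I} a family with α < a_i < b_i < β for all i ∈ I, such that the closed intervals [a_i, b_i] are pairwise disjoint. Then there exists a continuous monotone increasing function f : [α,β] → [0,1] with f(α) = 0, f(β) = 1, and f constant on each interval [a_i, b_i]. -/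
/-!
Removing the open gaps `(a i, b i)` from `[α, β]` leaves a closed set `E` without isolated points:
a point of `E` is approached within `E` from a side on which it does not border a gap, since a gap
meeting a small one-sided neighbourhood of it has an endpoint in `E` that is closer still. Being a
nonempty perfect subset of `ℝ`, `E` contains a continuous injective image of the Cantor space, and
the image of the coin-tossing measure is an atomless probability measure `μ` living on `E`. The
distribution function of `μ` is the staircase: it is continuous because `μ` has no atoms, and it
is constant on each `[a i, b i]` because `μ` gives no mass to `(a i, b i)`.
-/

open Set Filter Topology MeasureTheory ProbabilityTheory OrderDual

noncomputable def coinTossing : Measure (ℕ → Bool) :=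
  Measure.infinitePi fun _ => (PMF.uniformOfFintype Bool).toMeasure

instance : IsProbabilityMeasure coinTossing := by
  unfold coinTossing; infer_instance

instance : NullSingletonClass coinTossing where
  measure_singleton s := by
    have hcoin (c : Bool) : (PMF.uniformOfFintype Bool).toMeasure {c} = 2⁻¹ := by simp
    have hle (n : ℕ) : coinTossing {s} ≤ 2⁻¹ ^ n := by
      rw [coinTossing, Measure.infinitePi_singleton,
        ENNReal.tprod_eq_iInf_prod (by simp [hcoin])]
      simpa [hcoin] using iInf_le (fun t : Finset ℕ => ∏ _ ∈ t, (2⁻¹ : ENNReal)) (Finset.range n)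
    exact nonpos_iff_eq_zero.1 <|
      ge_of_tendsto' (ENNReal.tendsto_pow_atTop_nhds_zero_of_lt_one (by norm_num)) hle

theorem Perfect.exists_isProbabilityMeasure_nullSingletonClass {X : Type*} [MetricSpace X]
    [CompleteSpace X] [MeasurableSpace X] [BorelSpace X] {C : Set X} (hC : Perfect C)
    (hne : C.Nonempty) :
    ∃ μ : Measure X, IsProbabilityMeasure μ ∧ NullSingletonClass μ ∧ μ Cᶜ = 0 := by
  obtain ⟨F, hFC, hFcont, hFinj⟩ := hC.exists_nat_bool_injection hne
  have hF : Measurable F := hFcont.measurable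
  refine ⟨coinTossing.map F, Measure.isProbabilityMeasure_map hF.aemeasurable, ⟨fun x => ?_⟩, ?_⟩
  · rw [Measure.map_apply hF (measurableSet_singleton x)]
    exact (subsingleton_singleton.preimage hFinj).countable.measure_zero _
  · rw [Measure.map_apply hF hC.closed.isOpen_compl.measurableSet,
      preimage_eq_empty (disjoint_compl_left_iff_subset.2 hFC), measure_empty]

theorem StieltjesFunction.continuous_of_measure_singleton (f : StieltjesFunction ℝ)
    (hf : ∀ x, f.measure {x} = 0) : Continuous f := by
  refine continuous_iff_continuousAt.2 fun x => ?_
  rw [f.mono.continuousAt_iff_leftLim_eq_rightLim, f.rightLim_eq]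
  have hjump := hf x
  rw [f.measure_singleton, ENNReal.ofReal_eq_zero, sub_nonpos] at hjump
  exact le_antisymm (f.mono.leftLim_le le_rfl) hjump

section DistributionFunction

variable (μ : Measure ℝ) [IsProbabilityMeasure μ]

theorem continuous_cdf [NullSingletonClass μ] : Continuous (cdf μ) :=
  (cdf μ).continuous_of_measure_singleton fun x => by rw [measure_cdf]; exact measure_singleton x

theorem cdf_eq_of_measure_Ioo_eq_zero [NullSingletonClass μ] {x y z : ℝ} (h : μ (Ioo x y) = 0)
    (hz : z ∈ Icc x y) : cdf μ z = cdf μ x := by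
  have hIoc : μ (Ioc x z) = 0 :=
    measure_mono_null (Ioc_subset_Ioc_right hz.2) ((measure_congr Ioo_ae_eq_Ioc).symm.trans h)
  have hincr := (cdf μ).measure_Ioc x z
  rw [measure_cdf, hIoc, eq_comm, ENNReal.ofReal_eq_zero, sub_nonpos] at hincr
  exact le_antisymm hincr (monotone_cdf μ hz.1)

theorem cdf_eq_zero_of_measure_Iio_eq_zero [NullSingletonClass μ] {x : ℝ} (h : μ (Iio x) = 0) :
    cdf μ x = 0 := by
  rw [cdf_eq_real, measureReal_def, ← measure_congr Iio_ae_eq_Iic, h, ENNReal.toReal_zero]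

theorem cdf_eq_one_of_measure_Ioi_eq_zero {x : ℝ} (h : μ (Ioi x) = 0) : cdf μ x = 1 := by
  rw [cdf_eq_real, measureReal_def,
    (prob_compl_eq_zero_iff measurableSet_Iic).1 (by rwa [compl_Iic]), ENNReal.toReal_one]

end DistributionFunction

section Gaps

variable {X ι : Type*} [LinearOrder X] {I : Set ι} {a b : ι → X}

theorem notMem_iUnion_Ioo_of_mem_Icc_diff_Ioo
    (hdisj : I.PairwiseDisjoint fun i => Icc (a i) (b i)) {i : ι} (hi : i ∈ I) {y : X}
    (hy : y ∈ Icc (a i) (b i) \ Ioo (a i) (b i)) : y ∉ ⋃ j ∈ I, Ioo (a j) (b j) := by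
  rw [mem_iUnion₂]
  rintro ⟨j, hj, hyj⟩
  obtain rfl := hdisj.elim hi hj (not_disjoint_iff.2 ⟨y, hy.1, Ioo_subset_Icc_self hyj⟩)
  exact hy.2 hyj

variable [DenselyOrdered X]

theorem exists_notMem_iUnion_Ioo_of_lt {x z : X} (hx : x ∉ ⋃ i ∈ I, Ioo (a i) (b i))
    (ha : ∀ i ∈ I, a i ∉ ⋃ j ∈ I, Ioo (a j) (b j)) (hxa : ∀ i ∈ I, a i ≠ x) (hxz : x < z) :
    ∃ y ∈ Ioo x z, y ∉ ⋃ i ∈ I, Ioo (a i) (b i) := by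
  obtain ⟨m, hxm, hmz⟩ := exists_between hxz
  by_cases hm : m ∈ ⋃ i ∈ I, Ioo (a i) (b i)
  · obtain ⟨j, hj, hjm⟩ := mem_iUnion₂.1 hm
    have hxj : x ≤ a j := not_lt.1 fun h => hx (mem_iUnion₂.2 ⟨j, hj, h, hxm.trans hjm.2⟩)
    exact ⟨a j, ⟨hxj.lt_of_ne (hxa j hj).symm, hjm.1.trans hmz⟩, ha j hj⟩
  · exact ⟨m, ⟨hxm, hmz⟩, hm⟩

theorem exists_notMem_iUnion_Ioo_of_gt {x z : X} (hx : x ∉ ⋃ i ∈ I, Ioo (a i) (b i))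
    (hb : ∀ i ∈ I, b i ∉ ⋃ j ∈ I, Ioo (a j) (b j)) (hxb : ∀ i ∈ I, b i ≠ x) (hzx : z < x) :
    ∃ y ∈ Ioo z x, y ∉ ⋃ i ∈ I, Ioo (a i) (b i) := by
  have hdual : ⋃ i ∈ I, Ioo (toDual (b i)) (toDual (a i)) =
      ofDual ⁻¹' ⋃ i ∈ I, Ioo (a i) (b i) := by
    simp only [Ioo_toDual, preimage_iUnion₂]
  obtain ⟨y, hy, hyU⟩ := exists_notMem_iUnion_Ioo_of_lt (X := Xᵒᵈ) (a := toDual ∘ b)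
    (b := toDual ∘ a) (x := toDual x) (z := toDual z) (by simpa [hdual] using hx)
    (by simpa [hdual] using hb) hxb hzx
  exact ⟨ofDual y, ⟨hy.2, hy.1⟩, by simpa [hdual] using hyU⟩

variable [TopologicalSpace X] [OrderTopology X]

theorem perfect_Icc_diff_iUnion_Ioo {α β : X} (hαβ : α < β)
    (hab : ∀ i ∈ I, α < a i ∧ a i < b i ∧ b i < β)
    (hdisj : I.PairwiseDisjoint fun i => Icc (a i) (b i)) :
    Perfect (Icc α β \ ⋃ i ∈ I, Ioo (a i) (b i)) := by
  set U := ⋃ i ∈ I, Ioo (a i) (b i)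
  have ha : ∀ i ∈ I, a i ∉ U := fun i hi => notMem_iUnion_Ioo_of_mem_Icc_diff_Ioo hdisj hi
    ⟨left_mem_Icc.2 (hab i hi).2.1.le, fun h => lt_irrefl _ h.1⟩
  have hb : ∀ i ∈ I, b i ∉ U := fun i hi => notMem_iUnion_Ioo_of_mem_Icc_diff_Ioo hdisj hi
    ⟨right_mem_Icc.2 (hab i hi).2.1.le, fun h => lt_irrefl _ h.2⟩
  refine ⟨isClosed_Icc.sdiff (isOpen_biUnion fun _ _ => isOpen_Ioo), fun x hx => ?_⟩
  rw [accPt_iff_frequently_nhdsNE]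
  have from_right (hxβ : x < β) (hxa : ∀ i ∈ I, a i ≠ x) :
      ∃ᶠ y in 𝓝[≠] x, y ∈ Icc α β \ U := by
    have hfreq : ∃ᶠ y in 𝓝[>] x, y ∉ U := (nhdsGT_basis_of_exists_gt ⟨β, hxβ⟩).frequently_iff.2
      fun z hxz => exists_notMem_iUnion_Ioo_of_lt hx.2 ha hxa hxz
    refine ((hfreq.and_eventually (Ioo_mem_nhdsGT hxβ)).mono ?_).filter_mono (nhdsGT_le_nhdsNE x)
    exact fun y hy => ⟨⟨hx.1.1.trans hy.2.1.le, hy.2.2.le⟩, hy.1⟩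
  have from_left (hαx : α < x) (hxb : ∀ i ∈ I, b i ≠ x) :
      ∃ᶠ y in 𝓝[≠] x, y ∈ Icc α β \ U := by
    have hfreq : ∃ᶠ y in 𝓝[<] x, y ∉ U := (nhdsLT_basis_of_exists_lt ⟨α, hαx⟩).frequently_iff.2
      fun z hzx => exists_notMem_iUnion_Ioo_of_gt hx.2 hb hxb hzx
    refine ((hfreq.and_eventually (Ioo_mem_nhdsLT hαx)).mono ?_).filter_mono (nhdsLT_le_nhdsNE x)
    exact fun y hy => ⟨⟨hy.2.1.le, hy.2.2.le.trans hx.1.2⟩, hy.1⟩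
  by_cases hxa : ∀ i ∈ I, a i ≠ x
  · rcases hx.1.2.lt_or_eq with hxβ | rfl
    · exact from_right hxβ hxa
    · exact from_left hαβ fun i hi => (hab i hi).2.2.ne
  · obtain ⟨i, hi, rfl⟩ : ∃ i ∈ I, a i = x := by simpa using hxa
    refine from_left (hab i hi).1 fun j hj hji => ?_
    obtain rfl := hdisj.elim hj hi <| not_disjoint_iff.2
      ⟨b j, right_mem_Icc.2 (hab j hj).2.1.le, by rw [hji]; exact left_mem_Icc.2 (hab i hi).2.1.le⟩
    exact (hab j hj).2.1.ne' hji

end Gaps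
theorem stmt12_general (α β : ℝ) (hαβ : α < β) (I : Set ℕ)
    (a b : ℕ → ℝ)
    (hab : ∀ i ∈ I, α < a i ∧ a i < b i ∧ b i < β)
    (hdisj : ∀ i ∈ I, ∀ j ∈ I, i ≠ j →
      Disjoint (Set.Icc (a i) (b i)) (Set.Icc (a j) (b j))) :
    ∃ f : ℝ → ℝ, ContinuousOn f (Set.Icc α β) ∧ MonotoneOn f (Set.Icc α β) ∧
      (∀ x ∈ Set.Icc α β, f x ∈ Set.Icc (0 : ℝ) 1) ∧
      f α = 0 ∧ f β = 1 ∧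
      ∀ i ∈ I, ∀ x ∈ Set.Icc (a i) (b i), f x = f (a i) := by
  set E := Icc α β \ ⋃ i ∈ I, Ioo (a i) (b i)
  have hαE : α ∈ E := ⟨left_mem_Icc.2 hαβ.le, fun hα => by
    obtain ⟨i, hi, hαi⟩ := mem_iUnion₂.1 hα
    exact (hab i hi).1.not_gt hαi.1⟩
  obtain ⟨μ, _, _, hμE⟩ := (perfect_Icc_diff_iUnion_Ioo hαβ hab hdisj)
    |>.exists_isProbabilityMeasure_nullSingletonClass ⟨α, hαE⟩
  have hnull {s : Set ℝ} (hs : ∀ y ∈ s, y ∉ E) : μ s = 0 := measure_mono_null hs hμE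
  refine ⟨cdf μ, (continuous_cdf μ).continuousOn, (monotone_cdf μ).monotoneOn _,
    fun x _ => ⟨cdf_nonneg μ x, cdf_le_one μ x⟩, ?_, ?_, fun i hi x hx => ?_⟩
  · exact cdf_eq_zero_of_measure_Iio_eq_zero μ <| hnull fun y hy hyE => hyE.1.1.not_gt hy
  · exact cdf_eq_one_of_measure_Ioi_eq_zero μ <| hnull fun y hy hyE => hyE.1.2.not_gt hy
  · exact cdf_eq_of_measure_Ioo_eq_zero μ
      (hnull fun y hy hyE => hyE.2 (mem_iUnion₂.2 ⟨i, hi, hy⟩)) hx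

/-- Generalised Cantor staircase: given pairwise disjoint closed intervals
`[a_i, b_i] ⊂ ]α,β[`, there exists a continuous non-decreasing `f : [α,β] → [0,1]`
with `f(α) = 0`, `f(β) = 1`, constant on each `[a_i, b_i]`. -/
theorem stmt12 (α β : ℝ) (hαβ : α < β) (I : Set ℕ) (hI : I.Nonempty)
    (a b : ℕ → ℝ)
    (hab : ∀ i ∈ I, α < a i ∧ a i < b i ∧ b i < β)
    (hdisj : ∀ i ∈ I, ∀ j ∈ I, i ≠ j →
      Disjoint (Set.Icc (a i) (b i)) (Set.Icc (a j) (b j))) :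
    ∃ f : ℝ → ℝ, ContinuousOn f (Set.Icc α β) ∧ MonotoneOn f (Set.Icc α β) ∧
      (∀ x ∈ Set.Icc α β, f x ∈ Set.Icc (0 : ℝ) 1) ∧
      f α = 0 ∧ f β = 1 ∧
      ∀ i ∈ I, ∀ x ∈ Set.Icc (a i) (b i), f x = f (a i) :=
  stmt12_general α β hαβ I a b hab hdisj
end

section
/- Let Ω ⊂ ℝ^d be bounded open, θ ∈ S^{d-1}, and let μ_θ(A) = ∫_Ω χ_A(Φ_θ(x)) dx be the directional measure. Let A be a nonempty Borel subset of ∂_θΩ. Then μ_θ(A) > 0 if and only if the orthogonal projection P_θ(A) onto the hyperplane H_θ orthogonal to θ has positive (d-1)-dimensional Lebesgue measure. -/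
open Set MeasureTheory
open scoped ENNReal

/-!
A point `z` of `A` is reached by the exit map from every point of a short open segment
`z - ]0, r[ θ` inside `Ω`, and conversely `Φ_θ` moves points only along `θ`. Hence
`Φ_θ⁻¹(A) ∩ Ω` meets exactly the lines parallel to `θ` through points of `P_θ(A)`, and on each
such line it contains a segment of positive length. Writing the space as `ℝθ × θ^⊥`, Tonelli's
theorem shows that this set is Lebesgue-null iff `P_θ(A)` is null in `θ^⊥`, and on the hyperplane
`θ^⊥` the `(d-1)`-dimensional Hausdorff measure is a nonzero multiple of Lebesgue measure.
-/

open Module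

theorem MeasureTheory.Measure.prod_apply_eq_zero_iff_measure_image_snd
    {X Y : Type*} [MeasurableSpace X] [MeasurableSpace Y] {μ : Measure X} {ν : Measure Y}
    [SFinite μ] [SFinite ν] {W : Set (X × Y)} (hW : MeasurableSet W)
    (hslice : ∀ p ∈ W, μ ((·, p.2) ⁻¹' W) ≠ 0) :
    μ.prod ν W = 0 ↔ ν (Prod.snd '' W) = 0 := by
  have hsupp : {y | μ ((·, y) ⁻¹' W) ≠ 0} = Prod.snd '' W := by
    ext y
    refine ⟨fun hy => ?_, ?_⟩
    · obtain ⟨x, hx⟩ := nonempty_of_measure_ne_zero hy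
      exact ⟨(x, y), hx, rfl⟩
    · rintro ⟨p, hp, rfl⟩
      exact hslice p hp
  rw [Measure.prod_apply_symm hW, lintegral_eq_zero_iff (measurable_measure_prodMk_right hW),
    Filter.EventuallyEq, ae_iff]
  simp only [Pi.zero_apply, hsupp]

theorem InnerProductSpace.hausdorffMeasure_finrank_eq_zero_iff {V : Type*}
    [NormedAddCommGroup V] [InnerProductSpace ℝ V] [FiniteDimensional ℝ V]
    [MeasurableSpace V] [BorelSpace V] {T : Set V} :
    μH[finrank ℝ V] T = 0 ↔ volume T = 0 := by
  rw [← InnerProductSpace.euclideanHausdorffMeasure_eq_volume,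
    Measure.euclideanHausdorffMeasure_def]
  simp [Measure.addHaarScalarFactor_volume_hausdorffMeasure_ne_zero]

theorem volume_image_sub_smul_Ioo_ne_zero {E : Type*} [NormedAddCommGroup E]
    [InnerProductSpace ℝ E] [MeasurableSpace E] [BorelSpace E] {θ : E} (hθ : θ ≠ 0)
    (c : ℝ ∙ θ) {r : ℝ} (hr : 0 < r) :
    volume ((fun u : ℝ => c - u • ⟨θ, Submodule.mem_span_singleton_self θ⟩) '' Ioo 0 r) ≠ 0 :=
  (IsOpen.measure_pos volume
    (((ContinuousLinearEquiv.toSpanNonzeroSingleton ℝ θ hθ).toHomeomorph.trans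
      (Homeomorph.subLeft c)).isOpenMap _ isOpen_Ioo) ((nonempty_Ioo.2 hr).image _)).ne'

section Line

variable {E : Type*} [NormedAddCommGroup E] [InnerProductSpace ℝ E] [FiniteDimensional ℝ E]
  [MeasurableSpace E] [BorelSpace E]

theorem Submodule.measurableEquivProd_span_singleton_sub_smul (θ x : E) (t : ℝ) :
    (ℝ ∙ θ).measurableEquivProd (0 : E) (x - t • θ) =
      (((ℝ ∙ θ).measurableEquivProd 0 x).1 - t • ⟨θ, Submodule.mem_span_singleton_self θ⟩,
        ((ℝ ∙ θ).measurableEquivProd 0 x).2) := by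
  have hθ : (ℝ ∙ θ).orthogonalProjectionOnto θ = ⟨θ, Submodule.mem_span_singleton_self θ⟩ :=
    Submodule.orthogonalProjectionOnto_mem_subspace_eq_self ⟨θ, _⟩
  simp [hθ, Submodule.orthogonalProjectionOnto_orthogonalComplement_singleton_eq_zero]

theorem volume_eq_zero_iff_volume_orthogonalProjection_eq_zero {θ : E} (hθ : θ ≠ 0)
    {F A : Set E} (hF : MeasurableSet F) (hFA : ∀ x ∈ F, ∃ t : ℝ, x + t • θ ∈ A)
    (hAF : ∀ z ∈ A, ∃ r > 0, ∀ t ∈ Ioo (0 : ℝ) r, z - t • θ ∈ F) :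
    volume F = 0 ↔ volume ((ℝ ∙ θ)ᗮ.orthogonalProjectionOnto '' A) = 0 := by
  set G := (ℝ ∙ θ).measurableEquivProd (0 : E)
  have hG : ∀ x, (G x).2 = (ℝ ∙ θ)ᗮ.orthogonalProjectionOnto x := fun x => by simp [G]
  have hG_sub : ∀ x (t : ℝ), G (x - t • θ) =
      ((G x).1 - t • ⟨θ, Submodule.mem_span_singleton_self θ⟩, (G x).2) :=
    Submodule.measurableEquivProd_span_singleton_sub_smul θ
  set W := G.symm ⁻¹' F
  have hW : MeasurableSet W := G.symm.measurable hF
  have hvol : volume F = (volume.prod volume) W := by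
    rw [← Measure.volume_eq_prod, ((ℝ ∙ θ).measurePreserving_measurableEquivProd
      (0 : E)).symm.measure_preimage_equiv, InnerProductSpace.euclideanHausdorffMeasure_eq_volume]
  have hWA : ∀ p ∈ W, ∃ z ∈ A, (G z).2 = p.2 := by
    intro p hp
    obtain ⟨t, ht⟩ := hFA _ hp
    refine ⟨_, ht, ?_⟩
    rw [← sub_neg_eq_add, ← neg_smul, hG_sub, G.apply_symm_apply]
  have hsnd : Prod.snd '' W = (ℝ ∙ θ)ᗮ.orthogonalProjectionOnto '' A := by
    ext y
    constructor
    · rintro ⟨p, hp, rfl⟩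
      obtain ⟨z, hz, hzp⟩ := hWA p hp
      exact ⟨z, hz, by rw [← hG, hzp]⟩
    · rintro ⟨z, hz, rfl⟩
      obtain ⟨r, hr, hseg⟩ := hAF z hz
      refine ⟨G (z - (r / 2) • θ), by simpa [W] using hseg _ ⟨half_pos hr, half_lt_self hr⟩, ?_⟩
      rw [hG_sub, hG]
  have hslice : ∀ p ∈ W, volume ((·, p.2) ⁻¹' W) ≠ 0 := by
    intro p hp
    obtain ⟨z, hz, hzp⟩ := hWA p hp
    obtain ⟨r, hr, hseg⟩ := hAF z hz
    refine fun h0 => volume_image_sub_smul_Ioo_ne_zero hθ (G z).1 hr (measure_mono_null ?_ h0)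
    rintro _ ⟨u, hu, rfl⟩
    rw [mem_preimage, mem_preimage, ← hzp, ← hG_sub, G.symm_apply_apply]
    exact hseg u hu
  rw [hvol, Measure.prod_apply_eq_zero_iff_measure_image_snd hW hslice, hsnd]

theorem hausdorffMeasure_image_sub_inner_smul_eq_zero_iff {θ : E} (hθ : ‖θ‖ = 1) (A : Set E) :
    μH[(finrank ℝ E : ℝ) - 1] ((fun x => x - inner ℝ x θ • θ) '' A) = 0 ↔
      volume ((ℝ ∙ θ)ᗮ.orthogonalProjectionOnto '' A) = 0 := by
  have hθ0 : θ ≠ 0 := norm_ne_zero_iff.1 (by rw [hθ]; exact one_ne_zero)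
  have hrank : finrank ℝ (ℝ ∙ θ)ᗮ + 1 = finrank ℝ E := by
    rw [← finrank_span_singleton (K := ℝ) hθ0, add_comm]
    exact (ℝ ∙ θ).finrank_add_finrank_orthogonal
  have himage : (fun x => x - inner ℝ x θ • θ) '' A =
      Subtype.val '' ((ℝ ∙ θ)ᗮ.orthogonalProjectionOnto '' A) := by
    rw [image_image]
    refine image_congr fun x _ => ?_
    simp [Submodule.starProjection_unit_singleton ℝ hθ, real_inner_comm]
  rw [himage, isometry_subtype_coe.hausdorffMeasure_image (Or.inl (by rw [← hrank]; simp)),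
    ← hrank, Nat.cast_add, Nat.cast_one, add_sub_cancel_right,
    InnerProductSpace.hausdorffMeasure_finrank_eq_zero_iff]

end Line

section ExitMap

variable {d : ℕ} {Ω : Set (EuclideanSpace ℝ (Fin d))} {θ : EuclideanSpace ℝ (Fin d)}

def admissibleTimes (Ω : Set (EuclideanSpace ℝ (Fin d))) (θ x : EuclideanSpace ℝ (Fin d)) :
    Set ℝ :=
  {s | 0 ≤ s ∧ ∀ t ∈ Ico (0 : ℝ) s, x + t • θ ∈ Ω}

theorem zero_mem_admissibleTimes (x : EuclideanSpace ℝ (Fin d)) : 0 ∈ admissibleTimes Ω θ x :=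
  ⟨le_rfl, fun _ ht => absurd ht (by simp)⟩

theorem le_diam_div_norm_of_mem_admissibleTimes (hb : Bornology.IsBounded Ω) (hθ : θ ≠ 0)
    {x : EuclideanSpace ℝ (Fin d)} {s : ℝ} (hs : s ∈ admissibleTimes Ω θ x) :
    s ≤ Metric.diam Ω / ‖θ‖ := by
  refine le_of_forall_lt_imp_le_of_dense fun t hts => ?_
  rcases lt_or_ge t 0 with ht0 | ht0
  · exact ht0.le.trans (by positivity)
  have hx : x ∈ Ω := by simpa using hs.2 0 ⟨le_rfl, ht0.trans_lt hts⟩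
  rw [le_div_iff₀ (norm_pos_iff.2 hθ)]
  calc t * ‖θ‖ = dist (x + t • θ) x := by simp [dist_eq_norm, norm_smul, abs_of_nonneg ht0]
    _ ≤ Metric.diam Ω := Metric.dist_le_diam_of_mem hb (hs.2 t ⟨ht0, hts⟩) hx

theorem bddAbove_admissibleTimes (hb : Bornology.IsBounded Ω) (hθ : θ ≠ 0)
    (x : EuclideanSpace ℝ (Fin d)) : BddAbove (admissibleTimes Ω θ x) :=
  ⟨_, fun _ => le_diam_div_norm_of_mem_admissibleTimes hb hθ⟩

theorem deltaDir_nonneg_s16 (hb : Bornology.IsBounded Ω) (hθ : θ ≠ 0)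
    (x : EuclideanSpace ℝ (Fin d)) : 0 ≤ deltaDir Ω θ x :=
  le_csSup (bddAbove_admissibleTimes hb hθ x) (zero_mem_admissibleTimes x)

theorem deltaDir_sub_smul {z : EuclideanSpace ℝ (Fin d)} (hz : z ∉ Ω) {r : ℝ}
    (hseg : ∀ t ∈ Ioo 0 r, z - t • θ ∈ Ω) {t : ℝ} (ht : t ∈ Ioo 0 r) :
    deltaDir Ω θ (z - t • θ) = t := by
  refine IsGreatest.csSup_eq ⟨⟨ht.1.le, fun u hu => ?_⟩, fun s hs => ?_⟩
  · have : z - t • θ + u • θ = z - (t - u) • θ := by rw [sub_smul]; abel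
    rw [this]
    exact hseg _ ⟨by linarith [hu.2], by linarith [hu.1, ht.2]⟩
  · by_contra! hts
    exact hz (by simpa using hs.2 t ⟨ht.1.le, hts⟩)

theorem PhiDir_sub_smul {z : EuclideanSpace ℝ (Fin d)} (hz : z ∉ Ω) {r : ℝ}
    (hseg : ∀ t ∈ Ioo 0 r, z - t • θ ∈ Ω) {t : ℝ} (ht : t ∈ Ioo 0 r) :
    PhiDir Ω θ (z - t • θ) = z := by
  rw [PhiDir, deltaDir_sub_smul hz hseg ht, sub_add_cancel]

theorem lowerSemicontinuous_deltaDir (hΩ : IsOpen Ω) (hb : Bornology.IsBounded Ω)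
    (hθ : θ ≠ 0) : LowerSemicontinuous (deltaDir Ω θ) := by
  intro x c hc
  rcases lt_or_ge c 0 with hc0 | hc0
  · exact Filter.Eventually.of_forall fun x' => hc0.trans_le (deltaDir_nonneg_s16 hb hθ x')
  obtain ⟨s, hs, hcs⟩ := exists_lt_of_lt_csSup ⟨0, zero_mem_admissibleTimes x⟩ hc
  obtain ⟨s₀, hcs₀, hs₀s⟩ := exists_between hcs
  have hseg : (fun t : ℝ => x + t • θ) '' Icc 0 s₀ ⊆ Ω := by
    rintro _ ⟨t, ht, rfl⟩
    exact hs.2 t ⟨ht.1, ht.2.trans_lt hs₀s⟩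
  obtain ⟨ε, hε, hεΩ⟩ :=
    (isCompact_Icc.image (by fun_prop)).exists_thickening_subset_open hΩ hseg
  filter_upwards [Metric.ball_mem_nhds x hε] with x' hx'
  have hs₀ : s₀ ∈ admissibleTimes Ω θ x' := by
    refine ⟨hc0.trans hcs₀.le, fun t ht => hεΩ (Metric.mem_thickening_iff.2 ?_)⟩
    exact ⟨x + t • θ, ⟨t, Ico_subset_Icc_self ht, rfl⟩, by simpa [dist_add_right] using hx'⟩
  exact hcs₀.trans_le (le_csSup (bddAbove_admissibleTimes hb hθ x') hs₀)

theorem measurable_PhiDir (hΩ : IsOpen Ω) (hb : Bornology.IsBounded Ω) (hθ : θ ≠ 0) :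
    Measurable (PhiDir Ω θ) :=
  measurable_id.add ((lowerSemicontinuous_deltaDir hΩ hb hθ).measurable.smul_const θ)

end ExitMap

theorem stmt16_general {d : ℕ} (Ω : Set (EuclideanSpace ℝ (Fin d)))
    (hΩ : IsOpen Ω) (hb : Bornology.IsBounded Ω)
    (θ : EuclideanSpace ℝ (Fin d)) (hθ : ‖θ‖ = 1)
    (A : Set (EuclideanSpace ℝ (Fin d))) (hAm : MeasurableSet A)
    (hAsub : A ⊆ {z | z ∈ frontier Ω ∧
      ∃ r > (0 : ℝ), ∀ t ∈ Set.Ioo (0 : ℝ) r, z - t • θ ∈ Ω}) :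
    (0 < ∫⁻ x in Ω, A.indicator (fun _ => (1 : ℝ≥0∞)) (PhiDir Ω θ x) ∂volume) ↔
      0 < μH[(d : ℝ) - 1] ((fun x => x - (inner ℝ x θ : ℝ) • θ) '' A) := by
  have hθ0 : θ ≠ 0 := norm_ne_zero_iff.1 (by rw [hθ]; exact one_ne_zero)
  have hpre : MeasurableSet (PhiDir Ω θ ⁻¹' A) := measurable_PhiDir hΩ hb hθ0 hAm
  have hlhs : ∫⁻ x in Ω, A.indicator (fun _ => (1 : ℝ≥0∞)) (PhiDir Ω θ x) ∂volume =
      volume (PhiDir Ω θ ⁻¹' A ∩ Ω) := by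
    simp_rw [← indicator_comp_right, ← Pi.one_def]
    rw [Pi.one_comp, lintegral_indicator_one hpre, Measure.restrict_apply hpre]
  have hrhs := hausdorffMeasure_image_sub_inner_smul_eq_zero_iff hθ A
  rw [finrank_euclideanSpace_fin] at hrhs
  rw [hlhs, pos_iff_ne_zero, pos_iff_ne_zero, not_iff_not, hrhs,
    volume_eq_zero_iff_volume_orthogonalProjection_eq_zero hθ0 (hpre.inter hΩ.measurableSet)]
  · rintro x ⟨hxA, -⟩
    exact ⟨deltaDir Ω θ x, hxA⟩
  · intro z hz
    obtain ⟨hzΩ, r, hr, hseg⟩ := hAsub hz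
    have hzΩ : z ∉ Ω := fun h => (hΩ.inter_frontier_eq.subset ⟨h, hzΩ⟩).elim
    exact ⟨r, hr, fun t ht => ⟨by rwa [mem_preimage, PhiDir_sub_smul hzΩ hseg ht], hseg t ht⟩⟩

/-- For a nonempty Borel set `A ⊆ ∂_θΩ`, `μ_θ(A) > 0` iff the orthogonal projection
`P_θ(A)` onto the hyperplane orthogonal to `θ` has positive `(d-1)`-dimensional
measure (expressed via the `(d-1)`-dimensional Hausdorff measure). -/
theorem stmt16 {d : ℕ} (Ω : Set (EuclideanSpace ℝ (Fin d)))
    (hΩ : IsOpen Ω) (hb : Bornology.IsBounded Ω)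
    (θ : EuclideanSpace ℝ (Fin d)) (hθ : ‖θ‖ = 1)
    (A : Set (EuclideanSpace ℝ (Fin d))) (hA : A.Nonempty) (hAm : MeasurableSet A)
    (hAsub : A ⊆ {z | z ∈ frontier Ω ∧
      ∃ r > (0 : ℝ), ∀ t ∈ Set.Ioo (0 : ℝ) r, z - t • θ ∈ Ω}) :
    (0 < ∫⁻ x in Ω, A.indicator (fun _ => (1 : ℝ≥0∞)) (PhiDir Ω θ x) ∂volume) ↔
      0 < μH[(d : ℝ) - 1] ((fun x => x - (inner ℝ x θ : ℝ) • θ) '' A) :=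
  stmt16_general Ω hΩ hb θ hθ A hAm hAsub
end
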